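/- Let L_0 = ∂_t, L_1 = e^{-t} ∂_t, L_{-1} = e^{t} ∂_t, L_2 = e^{-2t} ∂_t, and C = ∂_u be vector fields on ℝ³ (coordinates (t,x,u)). Then there exists NO smooth vector field Y on ℝ³ satisfying simultaneously [L_0, Y] = 2Y, [L_1, Y] = 3L_{-1}, [L_2, Y] = 4L_0 + (1/2)C, and [Y, C] = 0. (Case 1 of Section 4: the first realization of the Witt algebra admits no extension to a realization of the Virasoro algebra with nonzero central element.) -/
import Mathlib


noncomputable section

/-- Partial derivative of `f : ℝ³ → ℝ` (curried) in the first variable `t`. -/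
def pt (f : ℝ → ℝ → ℝ → ℝ) (t x u : ℝ) : ℝ := deriv (fun s => f s x u) t

/-- Partial derivative in the second variable `x`. -/
def px (f : ℝ → ℝ → ℝ → ℝ) (t x u : ℝ) : ℝ := deriv (fun s => f t s u) x

/-- Partial derivative in the third variable `u`. -/
def pu (f : ℝ → ℝ → ℝ → ℝ) (t x u : ℝ) : ℝ := deriv (fun s => f t x s) u

/-- A vector field `τ ∂_t + ξ ∂_x + η ∂_u` on ℝ³ with coordinates `(t,x,u)`. -/
structure VF3 where
  tau : ℝ → ℝ → ℝ → ℝ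
  xi  : ℝ → ℝ → ℝ → ℝ
  eta : ℝ → ℝ → ℝ → ℝ

/-- Action of a vector field on a function: `X(F) = τ F_t + ξ F_x + η F_u`. -/
def VF3.app (X : VF3) (F : ℝ → ℝ → ℝ → ℝ) (t x u : ℝ) : ℝ :=
  X.tau t x u * pt F t x u + X.xi t x u * px F t x u + X.eta t x u * pu F t x u

/-- Lie bracket of vector fields on ℝ³. -/
def VF3.bracket (X Y : VF3) : VF3 where
  tau := fun t x u => X.app Y.tau t x u - Y.app X.tau t x u
  xi  := fun t x u => X.app Y.xi t x u - Y.app X.xi t x u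
  eta := fun t x u => X.app Y.eta t x u - Y.app X.eta t x u

/-- Scalar multiple of a vector field. -/
def VF3.smul (c : ℝ) (X : VF3) : VF3 where
  tau := fun t x u => c * X.tau t x u
  xi  := fun t x u => c * X.xi t x u
  eta := fun t x u => c * X.eta t x u

/-- Smoothness of a coefficient function on ℝ³. -/
def Smooth3 (f : ℝ → ℝ → ℝ → ℝ) : Prop :=
  ContDiff ℝ (⊤ : ℕ∞) fun p : ℝ × ℝ × ℝ => f p.1 p.2.1 p.2.2

/-- `L₀ = ∂_t`. -/
def K0 : VF3 := ⟨fun _ _ _ => 1, fun _ _ _ => 0, fun _ _ _ => 0⟩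
/-- `L₁ = e^{-t} ∂_t`. -/
def K1 : VF3 := ⟨fun t _ _ => Real.exp (-t), fun _ _ _ => 0, fun _ _ _ => 0⟩
/-- `L₋₁ = e^t ∂_t`. -/
def Km1 : VF3 := ⟨fun t _ _ => Real.exp t, fun _ _ _ => 0, fun _ _ _ => 0⟩
/-- `L₂ = e^{-2t} ∂_t`. -/
def K2 : VF3 := ⟨fun t _ _ => Real.exp (-2 * t), fun _ _ _ => 0, fun _ _ _ => 0⟩
/-- The central element `C = ∂_u`. -/
def KC : VF3 := ⟨fun _ _ _ => 0, fun _ _ _ => 0, fun _ _ _ => 1⟩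

/-- Case 1 of Section 4: there is no smooth vector field `Y` (playing the role of `L₋₂`)
with `[L₀,Y] = 2Y`, `[L₁,Y] = 3L₋₁`, `[L₂,Y] = 4L₀ + (1/2)C` and `[Y,C] = 0`;
hence this realization of the Witt algebra does not extend to a realization of the
Virasoro algebra with nonzero central element. -/
theorem no_virasoro_extension_case1 :
    ¬ ∃ Y : VF3, Smooth3 Y.tau ∧ Smooth3 Y.xi ∧ Smooth3 Y.eta ∧
      VF3.bracket K0 Y = VF3.smul 2 Y ∧
      VF3.bracket K1 Y = VF3.smul 3 Km1 ∧
      VF3.bracket K2 Y = ⟨fun _ _ _ => 4, fun _ _ _ => 0, fun _ _ _ => 1 / 2⟩ ∧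
      VF3.bracket Y KC = ⟨fun _ _ _ => 0, fun _ _ _ => 0, fun _ _ _ => 0⟩ := by
  rintro ⟨Y, -, -, -, -, h1, h2, -⟩
  have e1 := congrFun (congrFun (congrFun (congrArg VF3.eta h1) 0) 0) 0
  have e2 := congrFun (congrFun (congrFun (congrArg VF3.eta h2) 0) 0) 0
  simp [VF3.bracket, VF3.app, VF3.smul, K1, K2, Km1, pt, px, pu] at e1 e2
  rw [e1] at e2
  norm_num at e2
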